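/- Under the separation assumption on the sign-restriction set S₀ (Assumption 1), each column of any candidate matrix R can be consistent with at most one structural shock: if column r of R satisfies all sign restrictions of shock j (or their negations), it cannot also satisfy all sign restrictions (or all negations) of a different shock k. -/
import Mathlib


theorem column_consistent_with_at_most_one_shock {n m : ℕ}
    (s : Fin n → Fin m → ℝ)
    (hs : ∀ i j, s i j = -1 ∨ s i j = 0 ∨ s i j = 1)
    (hsep : ∀ j k : Fin m, j ≠ k → ∃ i₁ i₂ : Fin n,
      s i₁ j = s i₁ k ∧ s i₁ j ≠ 0 ∧ s i₂ j = -s i₂ k ∧ s i₂ j ≠ 0)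
    (r : Fin n → ℝ)
    (hr : ∀ i, (∃ j, s i j ≠ 0) → r i ≠ 0) :
    ∀ j k : Fin m, j ≠ k →
      ¬(((∀ i, s i j * r i ≥ 0) ∨ (∀ i, s i j * (-r i) ≥ 0)) ∧
        ((∀ i, s i k * r i ≥ 0) ∨ (∀ i, s i k * (-r i) ≥ 0))) := by
  intro j k hjk
  rintro ⟨hj, hk⟩
  obtain ⟨i₁, i₂, h1, h1ne, h2, h2ne⟩ := hsep j k hjk
  have hr1 : r i₁ ≠ 0 := hr i₁ ⟨j, h1ne⟩
  have hr2 : r i₂ ≠ 0 := hr i₂ ⟨j, h2ne⟩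
  have hm1 : s i₁ j * r i₁ ≠ 0 := mul_ne_zero h1ne hr1
  have hm2 : s i₂ j * r i₂ ≠ 0 := mul_ne_zero h2ne hr2
  rcases hj with hj | hj <;> rcases hk with hk | hk
  · have a := hj i₂
    have b := hk i₂
    have e : s i₂ k * r i₂ = -(s i₂ j * r i₂) := by rw [h2]; ring
    exact hm2 (by linarith)
  · have a := hj i₁
    have b := hk i₁
    have e : s i₁ k * -r i₁ = -(s i₁ j * r i₁) := by rw [h1]; ring
    exact hm1 (by linarith)
  · have a := hj i₁
    have b := hk i₁
    have e : s i₁ j * -r i₁ = -(s i₁ j * r i₁) := by ring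
    have e2 : s i₁ k * r i₁ = s i₁ j * r i₁ := by rw [h1]
    exact hm1 (by linarith)
  · have a := hj i₂
    have b := hk i₂
    have e : s i₂ j * -r i₂ = -(s i₂ j * r i₂) := by ring
    have e2 : s i₂ k * -r i₂ = s i₂ j * r i₂ := by rw [h2]; ring
    exact hm2 (by linarith)
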